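/- arXiv:1703.06736 — 6 statements merged into one kernel-verified Lean document; each statement's English description precedes it below -/
import Mathlib

section
/- Along every positive solution of the linear open-access harvest model with 0 ≤ z < 1, the quantity H(x,y) = α·(c·log x − b q x^{1−z}/(1−z)) + r·log y − q·y is conserved: if x, y : ℝ → ℝ are differentiable with x(t) > 0 and y(t) > 0 for all t, and satisfy x'(t) = r x(t) − q x(t) y(t) and y'(t) = α (b q x(t)^{1−z} y(t) − c y(t)) for all t, then t ↦ H(x(t), y(t)) is constant. -/
/-!
The quantity `H` is a first integral: its gradient `(α (c / x - b q x^(-z)), r / y - q)` is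
orthogonal to the vector field `(r x - q x y, α (b q x^(1-z) y - c y))`, so by the chain rule
`H` has zero derivative along every positive solution and is therefore constant.
-/

namespace OpenAccessHarvest

variable (r q c b α z : ℝ)

noncomputable def conservedQuantity (X Y : ℝ) : ℝ :=
  α * (c * Real.log X - b * q * X ^ (1 - z) / (1 - z)) + r * Real.log Y - q * Y

theorem gradient_conservedQuantity_inner_field_eq_zero {X Y : ℝ} (hX : 0 < X) (hY : 0 < Y) :
    α * (c / X - b * q * X ^ (-z)) * (r * X - q * X * Y)
      + (r / Y - q) * (α * (b * q * X ^ (1 - z) * Y - c * Y)) = 0 := by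
  have hpow : X ^ (1 - z) = X ^ (-z) * X := by
    rw [sub_eq_neg_add, Real.rpow_add hX, Real.rpow_one]
  rw [hpow]
  field_simp
  ring

variable {r q c b α z}

theorem _root_.HasDerivAt.rpow_const_div_self {f : ℝ → ℝ} {f' p t : ℝ}
    (hf : HasDerivAt f f' t) (hft : f t ≠ 0) (hp : p ≠ 0) :
    HasDerivAt (fun s => f s ^ p / p) (f t ^ (p - 1) * f') t :=
  (hf.rpow_const (Or.inl hft)).div_const p |>.congr_deriv (by field_simp)

theorem hasDerivAt_conservedQuantity {x y : ℝ → ℝ} {x' y' t : ℝ} (hz : z ≠ 1)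
    (hxt : 0 < x t) (hyt : 0 < y t) (hx : HasDerivAt x x' t) (hy : HasDerivAt y y' t) :
    HasDerivAt (fun s => conservedQuantity r q c b α z (x s) (y s))
      (α * (c / x t - b * q * x t ^ (-z)) * x' + (r / y t - q) * y') t := by
  have hpow := hx.rpow_const_div_self hxt.ne' (sub_ne_zero.2 hz.symm)
  rw [show 1 - z - 1 = -z by ring] at hpow
  have hH := (((hx.log hxt.ne').const_mul c).sub (hpow.const_mul (b * q))).const_mul α
    |>.add ((hy.log hyt.ne').const_mul r) |>.sub (hy.const_mul q)
  refine (hH.congr_deriv (by ring)).congr_of_eventuallyEq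
    (Filter.Eventually.of_forall fun s => ?_)
  simp only [conservedQuantity, mul_div_assoc, Pi.add_apply, Pi.sub_apply]

end OpenAccessHarvest

theorem conserved_quantity_linear_model_general
    (r q c b α z : ℝ) (hz1 : z < 1)
    (x y : ℝ → ℝ)
    (hxpos : ∀ t, 0 < x t) (hypos : ∀ t, 0 < y t)
    (hx : ∀ t, HasDerivAt x (r * x t - q * x t * y t) t)
    (hy : ∀ t, HasDerivAt y (α * (b * q * (x t) ^ (1 - z) * y t - c * y t)) t) :
    ∀ s t : ℝ,
      α * (c * Real.log (x s) - b * q * (x s) ^ (1 - z) / (1 - z))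
          + r * Real.log (y s) - q * y s
        = α * (c * Real.log (x t) - b * q * (x t) ^ (1 - z) / (1 - z))
          + r * Real.log (y t) - q * y t := by
  have hH : ∀ t, HasDerivAt
      (fun s => OpenAccessHarvest.conservedQuantity r q c b α z (x s) (y s)) 0 t := fun t =>
    (OpenAccessHarvest.hasDerivAt_conservedQuantity hz1.ne (hxpos t) (hypos t) (hx t) (hy t)
      ).congr_deriv (OpenAccessHarvest.gradient_conservedQuantity_inner_field_eq_zero
        r q c b α z (hxpos t) (hypos t))
  exact is_const_of_deriv_eq_zero (fun t => (hH t).differentiableAt) (fun t => (hH t).deriv)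

/-- Along every positive solution of the linear open-access harvest model
with `0 ≤ z < 1`, the quantity
`H(x,y) = α·(c·log x − b q x^(1−z)/(1−z)) + r·log y − q·y` is conserved. -/
theorem conserved_quantity_linear_model
    (r q c b α z : ℝ) (hr : 0 < r) (hq : 0 < q) (hc : 0 < c)
    (hb : 0 < b) (hα : 0 < α) (hz0 : 0 ≤ z) (hz1 : z < 1)
    (x y : ℝ → ℝ)
    (hxpos : ∀ t, 0 < x t) (hypos : ∀ t, 0 < y t)
    (hx : ∀ t, HasDerivAt x (r * x t - q * x t * y t) t)
    (hy : ∀ t, HasDerivAt y (α * (b * q * (x t) ^ (1 - z) * y t - c * y t)) t) :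
    ∀ s t : ℝ,
      α * (c * Real.log (x s) - b * q * (x s) ^ (1 - z) / (1 - z))
          + r * Real.log (y s) - q * y s
        = α * (c * Real.log (x t) - b * q * (x t) ^ (1 - z) / (1 - z))
          + r * Real.log (y t) - q * y t :=
  conserved_quantity_linear_model_general r q c b α z hz1 x y hxpos hypos hx hy
end

section
/- For z > 1, the stable direction of the saddle equilibrium of the linear open-access harvest model has slope b·√(α r (z−1)/c)·(c/(b q))^{z/(z−1)}: the Fréchet derivative at (x*, y*) = ((c/(b q))^{1/(1−z)}, r/q) of the vector field F(x,y) = (r x − q x y, α (b q x^{1−z} y − c y)) maps the vector (1, s), where s = b·√(α r (z−1)/c)·(c/(b q))^{z/(z−1)}, to (−√(α r c (z−1)))·(1, s); i.e. (1, s) is an eigenvector with negative eigenvalue −√(α r c (z−1)). -/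
/-!
At the equilibrium the diagonal of the Jacobian vanishes (`r - q y* = 0` and `b q x*^(1-z) = c`),
so the Jacobian is antidiagonal with entries `β = -q x*` and `γ = α (1-z) r c / (q x*)`.
An antidiagonal map sends `(1, μ/β)` to `μ • (1, μ/β)` as soon as `β γ = μ²`, and here
`β γ = α r c (z-1)`, so `μ = -√(α r c (z-1))` works. The slope `μ/β = √(α r c (z-1)) / (q x*)` is
the stated one because `c / (b q x*) = (c/(bq))^(z/(z-1))`.
-/

open ContinuousLinearMap

lemma rpow_one_div_one_sub_rpow_one_sub {K z : ℝ} (hK : 0 < K) (hz : z ≠ 1) :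
    (K ^ (1 / (1 - z))) ^ (1 - z) = K := by
  rw [← Real.rpow_mul hK.le, one_div_mul_cancel (sub_ne_zero.2 hz.symm), Real.rpow_one]

lemma div_rpow_one_div_one_sub {K z : ℝ} (hK : 0 < K) (hz : z ≠ 1) :
    K / K ^ (1 / (1 - z)) = K ^ (z / (z - 1)) := by
  have hexp : 1 - 1 / (1 - z) = z / (z - 1) := by
    field_simp [sub_ne_zero.2 hz, sub_ne_zero.2 hz.symm]
    ring
  rw [← hexp, Real.rpow_sub hK, Real.rpow_one]

lemma sqrt_mul_eq_mul_sqrt_div {w c : ℝ} (hc : 0 < c) : √(w * c) = c * √(w / c) := by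
  rw [show w * c = c ^ 2 * (w / c) by field_simp, Real.sqrt_mul (sq_nonneg c),
    Real.sqrt_sq hc.le]

lemma antidiagonal_eigenvector {β γ μ : ℝ} (hβ : β ≠ 0) (h : β * γ = μ ^ 2) :
    (β * (μ / β), γ * 1) = μ • ((1 : ℝ), μ / β) := by
  rw [Prod.smul_mk, smul_eq_mul, smul_eq_mul, mul_one, mul_one, mul_div_cancel₀ _ hβ]
  congr 1
  field_simp
  linear_combination h

namespace OpenAccessHarvest

variable (r q c b α z : ℝ)

noncomputable def field (p : ℝ × ℝ) : ℝ × ℝ :=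
  (r * p.1 - q * p.1 * p.2, α * (b * q * p.1 ^ (1 - z) * p.2 - c * p.2))

noncomputable def jacobian (x y : ℝ) : ℝ × ℝ →L[ℝ] ℝ × ℝ :=
  ((r - q * y) • fst ℝ ℝ ℝ - (q * x) • snd ℝ ℝ ℝ).prod
    ((α * (b * q * ((1 - z) * x ^ (-z)) * y)) • fst ℝ ℝ ℝ +
      (α * (b * q * x ^ (1 - z) - c)) • snd ℝ ℝ ℝ)

@[simp]
lemma jacobian_apply (x y u v : ℝ) :
    jacobian r q c b α z x y (u, v) =
      ((r - q * y) * u - q * x * v,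
        α * (b * q * ((1 - z) * x ^ (-z)) * y) * u + α * (b * q * x ^ (1 - z) - c) * v) := by
  simp [jacobian]

variable {r q c b α z}

lemma hasFDerivAt_field {x y : ℝ} (hx : x ≠ 0) :
    HasFDerivAt (field r q c b α z) (jacobian r q c b α z x y) (x, y) := by
  have hfst := hasFDerivAt_fst (𝕜 := ℝ) (p := (x, y))
  have hsnd := hasFDerivAt_snd (𝕜 := ℝ) (p := (x, y))
  have hpow : HasFDerivAt (fun p : ℝ × ℝ => p.1 ^ (1 - z))
      (((1 - z) * x ^ (-z)) • fst ℝ ℝ ℝ) (x, y) := by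
    simpa using hfst.rpow_const (p := 1 - z) (Or.inl hx)
  refine ((hfst.const_mul r).sub ((hfst.const_mul q).mul hsnd)).prodMk
    ((((hpow.const_mul (b * q)).mul hsnd).sub (hsnd.const_mul c)).const_mul α)
    |>.congr_fderiv ?_
  refine ContinuousLinearMap.ext fun ⟨u, v⟩ => ?_
  simp only [jacobian_apply, ContinuousLinearMap.prod_apply, sub_apply, smul_apply, coe_fst',
    smul_eq_mul, add_apply, coe_snd', Prod.mk.injEq]
  constructor <;> ring

lemma jacobian_apply_of_balance {x : ℝ} (hq : q ≠ 0) (hx : x ≠ 0)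
    (hbal : b * q * x ^ (1 - z) = c) (u v : ℝ) :
    jacobian r q c b α z x (r / q) (u, v) =
      (-(q * x) * v, α * (1 - z) * r * c / (q * x) * u) := by
  have hxz : x ^ (-z) = x ^ (1 - z) / x := by
    rw [← Real.rpow_sub_one hx, sub_sub_cancel_left]
  rw [jacobian_apply, hxz, ← hbal]
  ext <;> field_simp <;> ring

end OpenAccessHarvest

/-- For `z > 1`, the vector `(1, s)` with
`s = b·√(α r (z−1)/c)·(c/(bq))^(z/(z−1))` is an eigenvector, with negative eigenvalue
`−√(α r c (z−1))`, of the Fréchet derivative of the linear open-access harvest vector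
field at the saddle equilibrium `(x*, y*) = ((c/(bq))^(1/(1−z)), r/q)`. -/
theorem linear_model_stable_direction
    (r q c b α z : ℝ) (hr : 0 < r) (hq : 0 < q) (hc : 0 < c)
    (hb : 0 < b) (hα : 0 < α) (hz : 1 < z) :
    let F : ℝ × ℝ → ℝ × ℝ := fun p =>
      (r * p.1 - q * p.1 * p.2, α * (b * q * p.1 ^ (1 - z) * p.2 - c * p.2))
    let xstar : ℝ := (c / (b * q)) ^ (1 / (1 - z))
    let ystar : ℝ := r / q
    let s : ℝ := b * Real.sqrt (α * r * (z - 1) / c) * (c / (b * q)) ^ (z / (z - 1))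
    ∃ A : ℝ × ℝ →L[ℝ] ℝ × ℝ, HasFDerivAt F A (xstar, ystar) ∧
      A (1, s) = (-(Real.sqrt (α * r * c * (z - 1)))) • ((1 : ℝ), s) := by
  intro F xstar ystar s
  have hK : 0 < c / (b * q) := by positivity
  have hx : 0 < xstar := Real.rpow_pos_of_pos hK _
  have hbal : b * q * xstar ^ (1 - z) = c := by
    rw [rpow_one_div_one_sub_rpow_one_sub hK hz.ne']
    field_simp
  have hs : s = -√(α * r * c * (z - 1)) / -(q * xstar) := by
    simp only [s, xstar]
    rw [neg_div_neg_eq, show α * r * c * (z - 1) = α * r * (z - 1) * c by ring,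
      sqrt_mul_eq_mul_sqrt_div hc, ← div_rpow_one_div_one_sub hK hz.ne']
    field_simp
  refine ⟨OpenAccessHarvest.jacobian r q c b α z xstar ystar,
    OpenAccessHarvest.hasFDerivAt_field hx.ne', ?_⟩
  rw [OpenAccessHarvest.jacobian_apply_of_balance hq.ne' hx.ne' hbal, hs]
  refine antidiagonal_eigenvector (neg_ne_zero.2 (mul_pos hq hx).ne') ?_
  rw [neg_sq, Real.sq_sqrt (by have := sub_pos.2 hz; positivity)]
  field_simp
  ring
end

section
/- Fix positive reals α, r, c, b, q with c < b q. The map z ↦ b^{1/(1−z)} · c^{(z+1)/(2z−2)} · q^{z/(1−z)} · √(α r (z−1)) is strictly increasing on the interval (1, ∞). -/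
/-!
Collecting exponents, for `z > 1` the slope equals
`√(α r c) / q · a ^ (1 / (z - 1)) · √(z - 1)` with `a = c / (b q)`. Since `c < b q` we have
`0 < a < 1`, so `t ↦ a ^ (1 / t)` is increasing on `t > 0`, as is `√t`; both are positive, hence
so is their product.
-/

open Real Set

lemma strictMonoOn_rpow_inv_mul_sqrt {a : ℝ} (ha₀ : 0 < a) (ha₁ : a < 1) :
    StrictMonoOn (fun t : ℝ => a ^ t⁻¹ * √t) (Ioi 0) := by
  intro s hs t _ hst
  have hpow : a ^ s⁻¹ < a ^ t⁻¹ := rpow_lt_rpow_of_exponent_gt ha₀ ha₁ (inv_strictAnti₀ hs hst)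
  exact mul_lt_mul'' hpow (sqrt_lt_sqrt (le_of_lt hs) hst) (by positivity) (sqrt_nonneg _)

lemma rpow_mul_rpow_mul_rpow_eq_sqrt_div_mul_rpow {b c q z : ℝ} (hb : 0 < b) (hc : 0 < c)
    (hq : 0 < q) (hz : z ≠ 1) :
    b ^ (1 / (1 - z)) * c ^ ((z + 1) / (2 * z - 2)) * q ^ (z / (1 - z))
      = √c / q * (c / (b * q)) ^ (z - 1)⁻¹ := by
  have hsqrt : √c / q = exp (log c / 2 - log q) := by
    rw [exp_sub, exp_log hq, sqrt_eq_rpow, rpow_def_of_pos hc, mul_one_div]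
  rw [hsqrt, rpow_def_of_pos hb, rpow_def_of_pos hc, rpow_def_of_pos hq,
    rpow_def_of_pos (div_pos hc (mul_pos hb hq)), log_div hc.ne' (mul_pos hb hq).ne',
    log_mul hb.ne' hq.ne', ← exp_add, ← exp_add, ← exp_add]
  congr 1
  field_simp
  ring

/-- for fixed positive `α, r, c, b, q` with `c < b q`, the separatrix slope
`z ↦ b^(1/(1−z)) · c^((z+1)/(2z−2)) · q^(z/(1−z)) · √(α r (z−1))` is strictly increasing
on `(1, ∞)`. -/
theorem separatrix_slope_increasing_in_z
    (α r c b q : ℝ) (hα : 0 < α) (hr : 0 < r) (hc : 0 < c)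
    (hb : 0 < b) (hq : 0 < q) (hcbq : c < b * q) :
    StrictMonoOn
      (fun z : ℝ =>
        b ^ (1 / (1 - z)) * c ^ ((z + 1) / (2 * z - 2)) * q ^ (z / (1 - z))
          * Real.sqrt (α * r * (z - 1)))
      (Set.Ioi 1) := by
  have ha₀ : 0 < c / (b * q) := by positivity
  have ha₁ : c / (b * q) < 1 := (div_lt_one (by positivity)).2 hcbq
  have hmono : StrictMonoOn
      (fun z : ℝ => √c / q * √(α * r) * ((c / (b * q)) ^ (z - 1)⁻¹ * √(z - 1))) (Ioi 1) := by
    intro x hx y hy hxy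
    refine mul_lt_mul_of_pos_left ?_ (by positivity)
    exact strictMonoOn_rpow_inv_mul_sqrt ha₀ ha₁ (mem_Ioi.2 (sub_pos.2 hx))
      (mem_Ioi.2 (sub_pos.2 hy)) (sub_lt_sub_right hxy 1)
  refine hmono.congr fun z hz => ?_
  rw [rpow_mul_rpow_mul_rpow_eq_sqrt_div_mul_rpow hb hc hq (ne_of_gt hz),
    sqrt_mul' _ (sub_pos.2 hz).le]
  ring
end

section
/- In the linear-growth harvest model with minimum price a and z = 2, if c > 2 q √(a b), then the smaller positive equilibrium (x₁, r/q), with x₁ = (c − √(c² − 4 a b q²))/(2 a q), is a saddle: the Fréchet derivative at (x₁, r/q) of the vector field F(x,y) = (r x − q x y, α ((a + b/x²) q x y − c y)), viewed as a linear map ℝ² → ℝ², has strictly negative determinant. -/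
/-!
On the line `y = r / q` the first row of the Jacobian of the field is `(0, -q x)`, so its
determinant is `q x · ∂ₓG = α r x (q x P(x))'`: the equilibrium is a saddle exactly where
the revenue per unit of effort `q x P(x) = q (a x + b / x)` is decreasing, i.e. where
`a x² < b`. The smaller root `x₁ = (c - s) / (2 a q)` of `a q x² - c x + b q`, with
`s² = c² - 4 a b q²`, satisfies this because `(c - s)² < (c - s)(c + s) = 4 a b q²`.
-/

section PartialDerivatives

variable {E : Type*} [NormedAddCommGroup E] [NormedSpace ℝ E]
  {f : ℝ × ℝ → E} {f' : ℝ × ℝ →L[ℝ] E} {x y : ℝ}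

theorem HasFDerivAt.hasDerivAt_apply_left (h : HasFDerivAt f f' (x, y)) :
    HasDerivAt (fun t => f (t, y)) (f' (1, 0)) x :=
  h.comp_hasDerivAt x ((hasDerivAt_id x).prodMk (hasDerivAt_const x y))

theorem HasFDerivAt.hasDerivAt_apply_right (h : HasFDerivAt f f' (x, y)) :
    HasDerivAt (fun t => f (x, t)) (f' (0, 1)) y :=
  h.comp_hasDerivAt y ((hasDerivAt_const y x).prodMk (hasDerivAt_id y))

end PartialDerivatives

def harvestField (r q c α : ℝ) (P : ℝ → ℝ) (p : ℝ × ℝ) : ℝ × ℝ :=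
  (r * p.1 - q * p.1 * p.2, α * (P p.1 * q * p.1 * p.2 - c * p.2))

namespace harvestField

variable {r q c α : ℝ} {P : ℝ → ℝ} {P' x y : ℝ}

theorem hasDerivAt_left (hP : HasDerivAt P P' x) :
    HasDerivAt (fun t => harvestField r q c α P (t, y))
      (r - q * y, α * (q * y * (P x + x * P'))) x := by
  have h₁ := ((hasDerivAt_id' x).const_mul r).sub (((hasDerivAt_id' x).const_mul q).mul_const y)
  have h₂ :=
    ((((hP.mul_const q).mul (hasDerivAt_id' x)).mul_const y).sub_const (c * y)).const_mul α
  convert h₁.prodMk h₂ using 1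
  · rfl
  · ext <;> ring

theorem hasDerivAt_right :
    HasDerivAt (fun t => harvestField r q c α P (x, t))
      (-(q * x), α * (P x * q * x - c)) y := by
  have h₁ := ((hasDerivAt_id' y).const_mul (q * x)).const_sub (r * x)
  have h₂ := (((hasDerivAt_id' y).const_mul (P x * q * x)).sub
    ((hasDerivAt_id' y).const_mul c)).const_mul α
  convert h₁.prodMk h₂ using 1
  · rfl
  · ext <;> ring

theorem exists_hasFDerivAt_det_eq (hq : q ≠ 0) (hP : HasDerivAt P P' x) :
    ∃ A : ℝ × ℝ →L[ℝ] ℝ × ℝ, HasFDerivAt (harvestField r q c α P) A (x, r / q) ∧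
      (A (1, 0)).1 * (A (0, 1)).2 - (A (0, 1)).1 * (A (1, 0)).2 =
        α * q * r * x * (P x + x * P') := by
  have hP₁ : DifferentiableAt ℝ P (x, r / q).1 := hP.differentiableAt
  have hF : DifferentiableAt ℝ (harvestField r q c α P) (x, r / q) := by
    unfold harvestField; fun_prop
  refine ⟨_, hF.hasFDerivAt, ?_⟩
  rw [hF.hasFDerivAt.hasDerivAt_apply_left.unique (hasDerivAt_left hP),
    hF.hasFDerivAt.hasDerivAt_apply_right.unique hasDerivAt_right]
  field_simp
  ring

end harvestField

theorem hasDerivAt_const_add_div_sq (a b : ℝ) {x : ℝ} (hx : x ≠ 0) :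
    HasDerivAt (fun t => a + b / t ^ 2) (-(2 * b) / x ^ 3) x :=
  ((hasDerivAt_const x a).add ((hasDerivAt_const x b).div (hasDerivAt_pow 2 x)
    (pow_ne_zero 2 hx))).congr_deriv (by field_simp; ring)

theorem const_add_div_sq_add_mul_neg {a b x : ℝ} (hx : 0 < x) (hax : a * x ^ 2 < b) :
    a + b / x ^ 2 + x * (-(2 * b) / x ^ 3) < 0 := by
  have : a + b / x ^ 2 + x * (-(2 * b) / x ^ 3) = (a * x ^ 2 - b) / x ^ 2 := by
    field_simp
    ring
  rw [this]
  exact div_neg_of_neg_of_pos (by linarith) (by positivity)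

theorem sub_sqrt_pos_and_sq_lt {c d : ℝ} (hc : 0 < c) (hd : 0 < d) (hdc : d < c ^ 2) :
    0 < c - √(c ^ 2 - d) ∧ (c - √(c ^ 2 - d)) ^ 2 < d := by
  set s := √(c ^ 2 - d)
  have hs_sq : s ^ 2 = c ^ 2 - d := Real.sq_sqrt (by linarith)
  have hs_pos : 0 < s := Real.sqrt_pos.mpr (by linarith)
  have hs_lt : s < c := by nlinarith
  exact ⟨by linarith, by nlinarith⟩

theorem minPrice_smaller_root {q b a c : ℝ} (hq : 0 < q) (hb : 0 < b) (ha : 0 < a)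
    (hgt : 2 * q * √(a * b) < c) :
    let x₁ := (c - √(c ^ 2 - 4 * a * b * q ^ 2)) / (2 * a * q)
    0 < x₁ ∧ a * x₁ ^ 2 < b := by
  intro x₁
  have hc : 0 < c := lt_of_le_of_lt (by positivity) hgt
  have hdisc : 4 * a * b * q ^ 2 < c ^ 2 :=
    calc 4 * a * b * q ^ 2 = (2 * q * √(a * b)) ^ 2 := by
          rw [mul_pow, Real.sq_sqrt (by positivity)]; ring
      _ < c ^ 2 := pow_lt_pow_left₀ hgt (by positivity) two_ne_zero
  obtain ⟨hpos, hsq⟩ := sub_sqrt_pos_and_sq_lt hc (by positivity) hdisc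
  refine ⟨div_pos hpos (by positivity), ?_⟩
  rw [div_pow, mul_div_assoc', div_lt_iff₀ (by positivity)]
  nlinarith

theorem min_price_z_two_saddle_general
    (r q c b α a : ℝ) (hr : 0 < r) (hq : 0 < q)
    (hb : 0 < b) (hα : 0 < α) (ha : 0 < a)
    (hgt : 2 * q * Real.sqrt (a * b) < c) :
    let F : ℝ × ℝ → ℝ × ℝ := fun p =>
      (r * p.1 - q * p.1 * p.2,
       α * ((a + b / p.1 ^ 2) * q * p.1 * p.2 - c * p.2))
    let x1 : ℝ := (c - Real.sqrt (c ^ 2 - 4 * a * b * q ^ 2)) / (2 * a * q)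
    ∃ A : ℝ × ℝ →L[ℝ] ℝ × ℝ, HasFDerivAt F A (x1, r / q) ∧
      (A (1, 0)).1 * (A (0, 1)).2 - (A (0, 1)).1 * (A (1, 0)).2 < 0 := by
  intro F x1
  obtain ⟨hx1, hax⟩ := minPrice_smaller_root hq hb ha hgt
  obtain ⟨A, hA, hdet⟩ := harvestField.exists_hasFDerivAt_det_eq (c := c) (α := α) hq.ne'
    (hasDerivAt_const_add_div_sq a b hx1.ne')
  refine ⟨A, hA, ?_⟩
  rw [hdet]
  exact mul_neg_of_pos_of_neg (mul_pos (by positivity) hx1)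
    (const_add_div_sq_add_mul_neg hx1 hax)

/-- in the linear-growth harvest model with minimum price `a` and `z = 2`,
if `c > 2q√(ab)` then the smaller positive equilibrium `(x₁, r/q)`, with
`x₁ = (c − √(c² − 4abq²))/(2aq)`, is a saddle: the Fréchet derivative of the vector
field there has strictly negative determinant. -/
theorem min_price_z_two_saddle
    (r q c b α a : ℝ) (hr : 0 < r) (hq : 0 < q) (hc : 0 < c)
    (hb : 0 < b) (hα : 0 < α) (ha : 0 < a)
    (hgt : 2 * q * Real.sqrt (a * b) < c) :
    let F : ℝ × ℝ → ℝ × ℝ := fun p =>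
      (r * p.1 - q * p.1 * p.2,
       α * ((a + b / p.1 ^ 2) * q * p.1 * p.2 - c * p.2))
    let x1 : ℝ := (c - Real.sqrt (c ^ 2 - 4 * a * b * q ^ 2)) / (2 * a * q)
    ∃ A : ℝ × ℝ →L[ℝ] ℝ × ℝ, HasFDerivAt F A (x1, r / q) ∧
      (A (1, 0)).1 * (A (0, 1)).2 - (A (0, 1)).1 * (A (1, 0)).2 < 0 :=
  min_price_z_two_saddle_general r q c b α a hr hq hb hα ha hgt
end

section
/- In the linear-growth harvest model with minimum price a and z = 1/2, the vector field F(x,y) = (r x − q x y, α ((a + b/√x) q x y − c y)) vanishes at the point (x̂, r/q) with x̂ = (2 a c + b² q − b √(4 a c q + b² q²))/(2 a² q), x̂ > 0; moreover the Fréchet derivative of F at (x̂, r/q), viewed as a linear map ℝ² → ℝ², has trace equal to zero. -/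
/-!
At an interior equilibrium `dx/dt = 0` forces `y = r/q`, and `dy/dt = 0` forces
`(a + b/√x) q x = c`. In `s = √x` this is the quadratic `a q s² + b q s = c`, whose positive root
squares to `x̂`. The diagonal of the Jacobian at `(x, y)` is `(r - q y, α ((a + b/√x) q x - c))`,
independently of the derivative of the price, so both entries vanish at the equilibrium.
-/

open ContinuousLinearMap

theorem quadratic_pos_root {A B C : ℝ} (hA : 0 < A) (hC : 0 < C) :
    let s := (√(B ^ 2 + 4 * A * C) - B) / (2 * A)
    0 < s ∧ A * s ^ 2 + B * s = C ∧
      s ^ 2 = (2 * A * C + B ^ 2 - B * √(B ^ 2 + 4 * A * C)) / (2 * A ^ 2) := by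
  intro s
  simp only [s]
  have hBS : B < √(B ^ 2 + 4 * A * C) :=
    Real.lt_sqrt_of_sq_lt (by nlinarith [mul_pos hA hC])
  have hS2 : √(B ^ 2 + 4 * A * C) ^ 2 = B ^ 2 + 4 * A * C := Real.sq_sqrt (by positivity)
  set S := √(B ^ 2 + 4 * A * C)
  refine ⟨div_pos (by linarith) (by positivity), ?_, ?_⟩
  · field_simp
    linear_combination hS2
  · field_simp
    linear_combination hS2

theorem exists_hasFDerivAt_harvestField_trace (r q c α : ℝ) {g : ℝ → ℝ} {x : ℝ}
    (hg : DifferentiableAt ℝ g x) (y : ℝ) :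
    ∃ A : ℝ × ℝ →L[ℝ] ℝ × ℝ,
      HasFDerivAt (fun p : ℝ × ℝ => (r * p.1 - q * p.1 * p.2, α * (g p.1 * p.2 - c * p.2)))
        A (x, y) ∧
      (A (1, 0)).1 + (A (0, 1)).2 = (r - q * y) + α * (g x - c) := by
  have hfst : HasFDerivAt (fun p : ℝ × ℝ => p.1) (fst ℝ ℝ ℝ) (x, y) := hasFDerivAt_fst
  have hsnd : HasFDerivAt (fun p : ℝ × ℝ => p.2) (snd ℝ ℝ ℝ) (x, y) := hasFDerivAt_snd
  have hgx : HasFDerivAt (fun p : ℝ × ℝ => g p.1) (deriv g x • fst ℝ ℝ ℝ) (x, y) :=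
    hg.hasDerivAt.comp_hasFDerivAt (x, y) hfst
  have hprey := (hfst.const_mul r).sub ((hfst.const_mul q).mul hsnd)
  have hpred := ((hgx.mul hsnd).sub (hsnd.const_mul c)).const_mul α
  refine ⟨_, hprey.prodMk hpred, ?_⟩
  simp only [prod_apply, sub_apply, add_apply, smul_apply, coe_fst', coe_snd', smul_eq_mul]
  ring

theorem min_price_z_half_equilibrium_general
    (r q c b α a : ℝ) (hq : 0 < q) (hc : 0 < c) (ha : 0 < a) :
    let F : ℝ × ℝ → ℝ × ℝ := fun p =>
      (r * p.1 - q * p.1 * p.2,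
       α * ((a + b / Real.sqrt p.1) * q * p.1 * p.2 - c * p.2))
    let xhat : ℝ :=
      (2 * a * c + b ^ 2 * q - b * Real.sqrt (4 * a * c * q + b ^ 2 * q ^ 2))
        / (2 * a ^ 2 * q)
    0 < xhat ∧
    (r * xhat - q * xhat * (r / q) = 0 ∧
     α * ((a + b / Real.sqrt xhat) * q * xhat * (r / q) - c * (r / q)) = 0) ∧
    ∃ A : ℝ × ℝ →L[ℝ] ℝ × ℝ, HasFDerivAt F A (xhat, r / q) ∧
      (A (1, 0)).1 + (A (0, 1)).2 = 0 := by
  intro F xhat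
  obtain ⟨hs_pos, hs_root, hs_sq⟩ := quadratic_pos_root (B := b * q) (mul_pos ha hq) hc
  set s := (√((b * q) ^ 2 + 4 * (a * q) * c) - b * q) / (2 * (a * q))
  have hxhat : xhat = s ^ 2 := by
    rw [hs_sq, show (b * q) ^ 2 + 4 * (a * q) * c = 4 * a * c * q + b ^ 2 * q ^ 2 by ring]
    simp only [xhat]
    field_simp
  have hxhat_pos : 0 < xhat := hxhat ▸ pow_pos hs_pos 2
  have hsqrt : √xhat = s := by rw [hxhat, Real.sqrt_sq hs_pos.le]
  have hprice : (a + b / √xhat) * q * xhat = c := by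
    rw [hsqrt, hxhat, ← hs_root]
    field_simp
  have hg : DifferentiableAt ℝ (fun x => (a + b / √x) * q * x) xhat := by
    have : √xhat ≠ 0 := hsqrt ▸ hs_pos.ne'
    fun_prop (disch := first | assumption | exact hxhat_pos.ne')
  obtain ⟨A, hA, htrace⟩ := exists_hasFDerivAt_harvestField_trace r q c α hg (r / q)
  refine ⟨hxhat_pos, ⟨by field_simp; ring, by rw [hprice]; ring⟩, A, hA, ?_⟩
  rw [htrace, hprice]
  field_simp
  ring

/-- in the linear-growth harvest model with minimum price `a` and
`z = 1/2`, the vector field vanishes at `(x̂, r/q)` with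
`x̂ = (2ac + b²q − b√(4acq + b²q²))/(2a²q) > 0`, and the Fréchet derivative of the
vector field at `(x̂, r/q)` has trace zero. -/
theorem min_price_z_half_equilibrium
    (r q c b α a : ℝ) (hr : 0 < r) (hq : 0 < q) (hc : 0 < c)
    (hb : 0 < b) (hα : 0 < α) (ha : 0 < a) :
    let F : ℝ × ℝ → ℝ × ℝ := fun p =>
      (r * p.1 - q * p.1 * p.2,
       α * ((a + b / Real.sqrt p.1) * q * p.1 * p.2 - c * p.2))
    let xhat : ℝ :=
      (2 * a * c + b ^ 2 * q - b * Real.sqrt (4 * a * c * q + b ^ 2 * q ^ 2))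
        / (2 * a ^ 2 * q)
    0 < xhat ∧
    (r * xhat - q * xhat * (r / q) = 0 ∧
     α * ((a + b / Real.sqrt xhat) * q * xhat * (r / q) - c * (r / q)) = 0) ∧
    ∃ A : ℝ × ℝ →L[ℝ] ℝ × ℝ, HasFDerivAt F A (xhat, r / q) ∧
      (A (1, 0)).1 + (A (0, 1)).2 = 0 :=
  min_price_z_half_equilibrium_general r q c b α a hq hc ha
end

section
/- In the logistic harvest model with minimum price a, the Fréchet derivative at the no-harvest equilibrium (k, 0) of the vector field G(x,y) = (r x (1 − x/k) − q x y, α ((a + b x^{−z}) q x y − c y)), viewed as a linear map ℝ² → ℝ², has trace −r + α(a q k + b q k^{1−z} − c) and determinant r α (c − a q k − b q k^{1−z}). Consequently, if c > a q k + b q k^{1−z} the determinant is strictly positive and the trace strictly negative (so (k,0) is locally stable), and if c < a q k + b q k^{1−z} the determinant is strictly negative (so (k,0) is a saddle). -/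
/-!
At `(k, 0)` the Jacobian of the model is upper triangular: the prey-row entries are
`-r` and `-qk`, and every entry of the harvest row carries a factor `y` except
`∂ẏ/∂y = α (P(k) q k - c)`, where `P(k) q k = a q k + b q k^(1-z)`. So the eigenvalues are
`-r` and `α (a q k + b q k^(1-z) - c)`, and trace and determinant are their sum and product.
-/

open ContinuousLinearMap

theorem hasFDerivAt_logistic_harvest_fst (r q k x y : ℝ) :
    HasFDerivAt (fun p : ℝ × ℝ => r * p.1 * (1 - p.1 / k) - q * p.1 * p.2)
      ((r * (1 - 2 * x / k) - q * y) • fst ℝ ℝ ℝ + (-(q * x)) • snd ℝ ℝ ℝ) (x, y) := by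
  have hx : HasFDerivAt (fun p : ℝ × ℝ => p.1) (fst ℝ ℝ ℝ) (x, y) := hasFDerivAt_fst
  have hy : HasFDerivAt (fun p : ℝ × ℝ => p.2) (snd ℝ ℝ ℝ) (x, y) := hasFDerivAt_snd
  refine (((hx.const_mul r).mul ((hasFDerivAt_const 1 _).sub (hx.mul_const k⁻¹))).sub
    ((hx.const_mul q).mul hy)).congr_fderiv ?_
  ext
  · simp only [Pi.sub_apply, sub_comp, add_comp, neg_comp, smul_comp, fst_comp_inl, snd_comp_inl,
      sub_apply, add_apply, neg_apply, smul_apply, id_apply, smul_eq_mul, smul_zero, zero_sub,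
      smul_neg, zero_add, mul_one, add_zero]
    ring
  · simp

theorem hasFDerivAt_logistic_harvest_snd (q c b α a z : ℝ) {x : ℝ} (hx : x ≠ 0) (y : ℝ) :
    HasFDerivAt (fun p : ℝ × ℝ => α * ((a + b * p.1 ^ (-z)) * q * p.1 * p.2 - c * p.2))
      ((α * q * y * (a + b * (1 - z) * x ^ (-z))) • fst ℝ ℝ ℝ
        + (α * ((a + b * x ^ (-z)) * q * x - c)) • snd ℝ ℝ ℝ) (x, y) := by
  have hfst : HasFDerivAt (fun p : ℝ × ℝ => p.1) (fst ℝ ℝ ℝ) (x, y) := hasFDerivAt_fst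
  have hsnd : HasFDerivAt (fun p : ℝ × ℝ => p.2) (snd ℝ ℝ ℝ) (x, y) := hasFDerivAt_snd
  have hpow := hfst.rpow_const (p := -z) (Or.inl hx)
  refine ((((((hasFDerivAt_const a _).add (hpow.const_mul b)).mul_const q).mul hfst).mul hsnd
    |>.sub (hsnd.const_mul c)).const_mul α).congr_fderiv ?_
  ext
  · simp only [Pi.add_apply, Pi.mul_apply, Real.rpow_sub_one hx, smul_add, smul_comp, sub_comp,
      add_comp, snd_comp_inl, fst_comp_inl, add_apply, smul_apply, neg_apply, id_apply,
      smul_eq_mul, smul_zero, neg_smul, smul_neg, neg_mul, zero_add, sub_zero, mul_one, add_zero]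
    field_simp
    ring
  · simp

theorem hasFDerivAt_logistic_harvest_at_carrying_capacity (r q c b α a z : ℝ) {k : ℝ}
    (hk : k ≠ 0) :
    HasFDerivAt (fun p : ℝ × ℝ => (r * p.1 * (1 - p.1 / k) - q * p.1 * p.2,
        α * ((a + b * p.1 ^ (-z)) * q * p.1 * p.2 - c * p.2)))
      (((-r) • fst ℝ ℝ ℝ + (-(q * k)) • snd ℝ ℝ ℝ).prod
        ((α * (a * q * k + b * q * k ^ (1 - z) - c)) • snd ℝ ℝ ℝ)) (k, 0) := by
  refine ((hasFDerivAt_logistic_harvest_fst r q k k 0).prodMk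
    (hasFDerivAt_logistic_harvest_snd q c b α a z hk 0)).congr_fderiv ?_
  have hgrowth : r * (1 - 2 * k / k) - q * 0 = -r := by
    field_simp
    ring
  have hrevenue : (a + b * k ^ (-z)) * q * k = a * q * k + b * q * k ^ (1 - z) := by
    rw [sub_eq_neg_add, Real.rpow_add_one hk]
    ring
  rw [hgrowth, hrevenue]
  ext <;> simp

theorem logistic_min_price_carrying_capacity_stability_general
    (r q c b α a k z : ℝ) (hr : 0 < r)
    (hα : 0 < α) (hk : 0 < k) :
    let G : ℝ × ℝ → ℝ × ℝ := fun p =>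
      (r * p.1 * (1 - p.1 / k) - q * p.1 * p.2,
       α * ((a + b * p.1 ^ (-z)) * q * p.1 * p.2 - c * p.2))
    ∃ A : ℝ × ℝ →L[ℝ] ℝ × ℝ, HasFDerivAt G A ((k : ℝ), (0 : ℝ)) ∧
      (A (1, 0)).1 + (A (0, 1)).2 = -r + α * (a * q * k + b * q * k ^ (1 - z) - c) ∧
      (A (1, 0)).1 * (A (0, 1)).2 - (A (0, 1)).1 * (A (1, 0)).2
        = r * α * (c - a * q * k - b * q * k ^ (1 - z)) ∧
      (a * q * k + b * q * k ^ (1 - z) < c →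
        0 < (A (1, 0)).1 * (A (0, 1)).2 - (A (0, 1)).1 * (A (1, 0)).2 ∧
        (A (1, 0)).1 + (A (0, 1)).2 < 0) ∧
      (c < a * q * k + b * q * k ^ (1 - z) →
        (A (1, 0)).1 * (A (0, 1)).2 - (A (0, 1)).1 * (A (1, 0)).2 < 0) := by
  intro G
  refine ⟨_, hasFDerivAt_logistic_harvest_at_carrying_capacity r q c b α a z hk.ne', ?_⟩
  simp only [prod_apply, add_apply, smul_apply, coe_fst', coe_snd', smul_eq_mul, mul_zero,
    mul_one, add_zero, zero_add, sub_zero]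
  refine ⟨trivial, by ring, fun hstable => ?_, fun hsaddle => ?_⟩
  · have hs := mul_neg_of_pos_of_neg hα (sub_neg.mpr hstable)
    constructor <;> nlinarith
  · nlinarith [mul_pos hα (sub_pos.mpr hsaddle)]

/-- in the logistic harvest model with minimum price `a`, the Fréchet
derivative at the no-harvest equilibrium `(k, 0)` has trace
`−r + α(aqk + bqk^(1−z) − c)` and determinant `rα(c − aqk − bqk^(1−z))`; hence `(k,0)`
is locally stable when `c > aqk + bqk^(1−z)` and a saddle when `c < aqk + bqk^(1−z)`. -/
theorem logistic_min_price_carrying_capacity_stability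
    (r q c b α a k z : ℝ) (hr : 0 < r) (hq : 0 < q) (hc : 0 < c)
    (hb : 0 < b) (hα : 0 < α) (ha : 0 < a) (hk : 0 < k) (hz : 0 ≤ z) :
    let G : ℝ × ℝ → ℝ × ℝ := fun p =>
      (r * p.1 * (1 - p.1 / k) - q * p.1 * p.2,
       α * ((a + b * p.1 ^ (-z)) * q * p.1 * p.2 - c * p.2))
    ∃ A : ℝ × ℝ →L[ℝ] ℝ × ℝ, HasFDerivAt G A ((k : ℝ), (0 : ℝ)) ∧
      (A (1, 0)).1 + (A (0, 1)).2 = -r + α * (a * q * k + b * q * k ^ (1 - z) - c) ∧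
      (A (1, 0)).1 * (A (0, 1)).2 - (A (0, 1)).1 * (A (1, 0)).2
        = r * α * (c - a * q * k - b * q * k ^ (1 - z)) ∧
      (a * q * k + b * q * k ^ (1 - z) < c →
        0 < (A (1, 0)).1 * (A (0, 1)).2 - (A (0, 1)).1 * (A (1, 0)).2 ∧
        (A (1, 0)).1 + (A (0, 1)).2 < 0) ∧
      (c < a * q * k + b * q * k ^ (1 - z) →
        (A (1, 0)).1 * (A (0, 1)).2 - (A (0, 1)).1 * (A (1, 0)).2 < 0) :=
  logistic_min_price_carrying_capacity_stability_general r q c b α a k z hr hα hk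
end
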